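/- arXiv:2511.11901 — 8 statements merged into one kernel-verified Lean document; each statement's English description precedes it below -/
import Mathlib

section
/- Let λ > 0 and let K ⊂ ℝⁿ be a convex body that is the intersection of a (possibly infinite) family of closed balls of radius 1/λ. Then the λ-dual body K^λ := ⋂_{x ∈ K} (x + (1/λ)B), where B is the closed unit ball, satisfies K + (−K^λ) = (1/λ)B. -/
open Metric Set MeasureTheory Pointwise RealInnerProductSpace

noncomputable section

abbrev Euc (n : ℕ) := EuclideanSpace ℝ (Fin n)

def IsConvexBody {n : ℕ} (K : Set (Euc n)) : Prop :=
  IsCompact K ∧ Convex ℝ K ∧ (interior K).Nonempty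

def IsLamConvex {n : ℕ} (lam : ℝ) (K : Set (Euc n)) : Prop :=
  IsConvexBody K ∧ ∃ C : Set (Euc n), C.Nonempty ∧ K = ⋂ c ∈ C, closedBall c (1/lam)

def lamDual {n : ℕ} (lam : ℝ) (K : Set (Euc n)) : Set (Euc n) :=
  ⋂ x ∈ K, closedBall x (1/lam)

def suppFn {n : ℕ} (K : Set (Euc n)) (u : Euc n) : ℝ :=
  sSup ((fun y => (inner ℝ u y : ℝ)) '' K)

def inradius {n : ℕ} (K : Set (Euc n)) : ℝ :=
  sSup {r : ℝ | ∃ c, closedBall c r ⊆ K}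

def circumradius {n : ℕ} (K : Set (Euc n)) : ℝ :=
  sInf {r : ℝ | ∃ c, K ⊆ closedBall c r}

def ballVol (m : ℕ) : ℝ := (volume (ball (0 : Euc m) 1)).toReal

def sphereIntegral (n : ℕ) (f : Euc n → ℝ) : ℝ :=
  ∫ u in sphere (0 : Euc n) 1, f u ∂(μH[(n : ℝ) - 1])

def intrinsicVolOne {n : ℕ} (K : Set (Euc n)) : ℝ :=
  (1 / ballVol (n - 1)) * sphereIntegral n (suppFn K)

def meanWidth {n : ℕ} (K : Set (Euc n)) : ℝ :=
  (2 / (μH[(n : ℝ) - 1] (sphere (0 : Euc n) 1)).toReal) * sphereIntegral n (suppFn K)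

def IsLens {n : ℕ} (lam : ℝ) (L : Set (Euc n)) : Prop :=
  (interior L).Nonempty ∧
    ∃ c₁ c₂ : Euc n, L = closedBall c₁ (1/lam) ∩ closedBall c₂ (1/lam)

def spindle {n : ℕ} (lam : ℝ) (p q : Euc n) : Set (Euc n) :=
  ⋂ c ∈ {c : Euc n | p ∈ closedBall c (1/lam) ∧ q ∈ closedBall c (1/lam)},
    closedBall c (1/lam)

def IsSpindle {n : ℕ} (lam : ℝ) (S : Set (Euc n)) : Prop :=
  (interior S).Nonempty ∧ ∃ p q : Euc n, dist p q ≤ 2/lam ∧ S = spindle lam p q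

/-!
Write `r = 1 / λ`. Since `x - y` has norm at most `r` for `x ∈ K`, `y ∈ K^λ`, and
`K + (-K^λ)` is convex, it suffices to reach every point `r • w` of the sphere. Let `x` maximize
`⟪w, ·⟫` on `K`; the claim is that the ball of radius `r` touching this supporting hyperplane
at `x` contains `K`, i.e. `x - r • w ∈ K^λ`. If some `k ∈ K` lay outside it, the points
`x + t • (k - x)` would lie at depth about `t * ‖k - x‖ ^ 2 / (2 * r)` inside every ball
of radius `r` containing `K`; for small `t` this beats the loss `t * ⟪w, x - k⟫` and yields
a point of `K` beyond the hyperplane.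
-/

open Filter Topology

section InnerProductSpace

variable {E : Type*} [NormedAddCommGroup E] [InnerProductSpace ℝ E]

lemma norm_one_sub_smul_add_smul_sq (A B : E) (t : ℝ) :
    ‖(1 - t) • A + t • B‖ ^ 2 =
      (1 - t) * ‖A‖ ^ 2 + t * ‖B‖ ^ 2 - t * (1 - t) * ‖A - B‖ ^ 2 := by
  rw [norm_add_sq_real, norm_sub_sq_real, real_inner_smul_left, real_inner_smul_right,
    norm_smul, norm_smul, mul_pow, mul_pow, Real.norm_eq_abs, Real.norm_eq_abs, sq_abs, sq_abs]
  ring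

lemma closedBall_segment_subset_biInter_closedBall {C : Set E} {r t : ℝ} {x k : E}
    (hx : x ∈ ⋂ c ∈ C, closedBall c r) (hk : k ∈ ⋂ c ∈ C, closedBall c r)
    (ht0 : 0 ≤ t) (ht1 : t ≤ 1) :
    closedBall (x + t • (k - x)) (r - √(r ^ 2 - t * (1 - t) * ‖k - x‖ ^ 2)) ⊆
      ⋂ c ∈ C, closedBall c r := by
  intro y hy
  simp only [mem_iInter₂, mem_closedBall] at hx hk ⊢
  intro c hc
  have hdepth : dist (x + t • (k - x)) c ≤ √(r ^ 2 - t * (1 - t) * ‖k - x‖ ^ 2) := by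
    have hsplit : x + t • (k - x) - c = (1 - t) • (x - c) + t • (k - c) := by module
    refine Real.le_sqrt_of_sq_le ?_
    rw [dist_eq_norm, hsplit, norm_one_sub_smul_add_smul_sq, sub_sub_sub_cancel_right,
      norm_sub_rev x k, ← dist_eq_norm, ← dist_eq_norm]
    have hxc : dist x c ^ 2 ≤ r ^ 2 := pow_le_pow_left₀ dist_nonneg (hx c hc) 2
    have hkc : dist k c ^ 2 ≤ r ^ 2 := pow_le_pow_left₀ dist_nonneg (hk c hc) 2
    nlinarith [mul_le_mul_of_nonneg_left hxc (sub_nonneg.2 ht1), mul_le_mul_of_nonneg_left hkc ht0]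
  linarith [dist_triangle y (x + t • (k - x)) c, mem_closedBall.1 hy]

theorem biInter_closedBall_subset_closedBall_of_isMaxOn {C : Set E} {r : ℝ} (hr : 0 < r)
    {w x : E} (hw : ‖w‖ = 1) (hx : x ∈ ⋂ c ∈ C, closedBall c r)
    (hmax : IsMaxOn (⟪w, ·⟫) (⋂ c ∈ C, closedBall c r) x) :
    ⋂ c ∈ C, closedBall c r ⊆ closedBall (x - r • w) r := by
  intro k hk
  by_contra hout
  set d := ‖k - x‖
  set a := ⟪w, k - x⟫
  have ha : a ≤ 0 := by
    have : ⟪w, k⟫ ≤ ⟪w, x⟫ := hmax hk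
    simp only [a, inner_sub_right]
    linarith
  have hfar : 0 < d ^ 2 + 2 * r * a := by
    have hsq : ‖k - x + r • w‖ ^ 2 = d ^ 2 + 2 * r * a + r ^ 2 := by
      rw [norm_add_sq_real, real_inner_smul_right, norm_smul, hw, real_inner_comm,
        Real.norm_of_nonneg hr.le]
      ring
    have : r < ‖k - x + r • w‖ := by
      rw [mem_closedBall, not_le, dist_eq_norm, sub_sub_eq_add_sub, add_sub_right_comm] at hout
      exact hout
    nlinarith [norm_nonneg (k - x + r • w)]
  -- Moving a little from `x` towards `k` loses `t * |a|` in the direction `w`, but gains depth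
  -- of order `t * d ^ 2 / (2 * r)`; the hypothesis `hfar` says that the gain wins.
  have hsmall : ∀ᶠ t in 𝓝 (0 : ℝ), t ≤ 1 ∧ 0 < r + t * a ∧
      0 < d ^ 2 + 2 * r * a + t * (a ^ 2 - d ^ 2) :=
    (eventually_le_nhds one_pos).and <|
      (((continuous_const.add (continuous_id.mul continuous_const)).tendsto' 0 r
        (by simp)).eventually_const_lt hr).and
      (((continuous_const.add (continuous_id.mul continuous_const)).tendsto' 0 _
        (by simp)).eventually_const_lt hfar)
  obtain ⟨t, ⟨ht1, hrt, hgain⟩, ht0⟩ :=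
    ((hsmall.filter_mono nhdsWithin_le_nhds).and (self_mem_nhdsWithin (s := Ioi 0))).exists
  set s := r - √(r ^ 2 - t * (1 - t) * d ^ 2)
  have hst : -(t * a) < s := by
    have : √(r ^ 2 - t * (1 - t) * d ^ 2) < r + t * a := (Real.sqrt_lt' hrt).2 (by nlinarith)
    linarith
  have hs : 0 ≤ s := by nlinarith
  have hp : x + t • (k - x) + s • w ∈ ⋂ c ∈ C, closedBall c r := by
    refine closedBall_segment_subset_biInter_closedBall hx hk ht0.le ht1 ?_
    rw [mem_closedBall, dist_eq_norm, add_sub_cancel_left, norm_smul, hw,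
      Real.norm_of_nonneg hs, mul_one]
  have : ⟪w, x + t • (k - x) + s • w⟫ ≤ ⟪w, x⟫ := hmax hp
  simp only [inner_add_right, real_inner_smul_right, real_inner_self_eq_norm_sq, hw] at this
  linarith

end InnerProductSpace

lemma closedBall_zero_subset_of_sphere_subset {F : Type*} [NormedAddCommGroup F]
    [NormedSpace ℝ F] {A : Set F} (hA : Convex ℝ A) (hne : A.Nonempty) {r : ℝ} (hr : 0 ≤ r)
    (h : sphere 0 r ⊆ A) : closedBall 0 r ⊆ A := by
  rcases subsingleton_or_nontrivial F with hF | hF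
  · obtain ⟨a, ha⟩ := hne
    intro z _
    rwa [Subsingleton.elim z a]
  · rw [← convexHull_sphere_eq_closedBall 0 hr]
    exact convexHull_min h hA

section lamDual

variable {n : ℕ} {lam : ℝ} {K : Set (Euc n)}

lemma mem_lamDual_iff {y : Euc n} : y ∈ lamDual lam K ↔ K ⊆ closedBall y (1 / lam) := by
  simp only [lamDual, mem_iInter₂, subset_def, mem_closedBall, dist_comm y]

lemma convex_lamDual : Convex ℝ (lamDual lam K) :=
  convex_iInter₂ fun _ _ => convex_closedBall _ _

lemma add_neg_lamDual_subset_closedBall : K + -lamDual lam K ⊆ closedBall 0 (1 / lam) := by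
  rintro _ ⟨x, hx, y, hy, rfl⟩
  simpa [dist_eq_norm] using mem_lamDual_iff.1 (mem_neg.1 hy) hx

lemma subset_lamDual_of_eq_biInter {C : Set (Euc n)}
    (hK : K = ⋂ c ∈ C, closedBall c (1 / lam)) :
    C ⊆ lamDual lam K := fun _ hc =>
  mem_lamDual_iff.2 (hK ▸ biInter_subset_of_mem hc)

lemma sphere_subset_add_neg_lamDual (hlam : 0 < lam) (hK : IsLamConvex lam K) :
    sphere 0 (1 / lam) ⊆ K + -lamDual lam K := by
  obtain ⟨⟨hKcpt, -, hKint⟩, C, -, hKC⟩ := hK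
  intro z hz
  have hr : 0 < 1 / lam := by positivity
  have hz' : ‖z‖ = 1 / lam := by simpa using hz
  set w := lam • z
  have hw : ‖w‖ = 1 := by
    rw [norm_smul, hz', Real.norm_of_nonneg hlam.le]
    field_simp
  obtain ⟨x, hxK, hmax⟩ := hKcpt.exists_isMaxOn (hKint.mono interior_subset)
    (continuous_const.inner continuous_id).continuousOn (f := (⟪w, ·⟫))
  subst hKC
  have hsupp := biInter_closedBall_subset_closedBall_of_isMaxOn hr hw hxK hmax
  refine ⟨x, hxK, -(x - (1 / lam) • w), neg_mem_neg.2 (mem_lamDual_iff.2 hsupp), ?_⟩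
  simp only [w, smul_smul, one_div, inv_mul_cancel₀ hlam.ne', one_smul]
  abel

end lamDual

theorem stmt0 {n : ℕ} (lam : ℝ) (hlam : 0 < lam) (K : Set (Euc n))
    (hK : IsLamConvex lam K) :
    K + (-(lamDual lam K)) = closedBall (0 : Euc n) (1/lam) := by
  obtain ⟨⟨-, hKconv, hKint⟩, C, hCne, hKC⟩ := id hK
  refine add_neg_lamDual_subset_closedBall.antisymm ?_
  obtain ⟨x, hx⟩ := hKint.mono interior_subset
  obtain ⟨c, hc⟩ := hCne
  exact closedBall_zero_subset_of_sphere_subset (hKconv.add convex_lamDual.neg)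
    ⟨x + -c, add_mem_add hx (neg_mem_neg.2 (subset_lamDual_of_eq_biInter hKC hc))⟩
    (by positivity) (sphere_subset_add_neg_lamDual hlam hK)
end
end

section
/- Let λ > 0 and let K ⊂ ℝⁿ be a λ-convex body with λ-dual K^λ. Then for every unit vector u, the support functions satisfy h_K(u) + h_{K^λ}(−u) = 1/λ. -/
/-! Let `p` maximise `⟪u, ·⟫` on `K` and `r = 1/λ`. Every point of `K^λ` is within `r` of `p`,
so `h_{K^λ}(-u) ≤ r - h_K(u)`, with equality as soon as `p - r u ∈ K^λ`, i.e. `K` lies in the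
`r`-ball centred at `p - r u`. Given `q ∈ K`, every `r`-ball containing `p` and `q` contains the
short circular arc of radius `r` from `p` to `q` in a plane containing `u`, so `K` contains that
arc. As `⟪u, ·⟫ ≤ ⟪u, p⟫` along it, the tangent of the arc at `p` makes an angle of at least
`π / 2` with `u`, and this is exactly `‖q - (p - r u)‖ ≤ r`. -/

open Metric Set MeasureTheory Pointwise RealInnerProductSpace

noncomputable section

section InnerProductSpace

variable {E : Type*} [NormedAddCommGroup E] [InnerProductSpace ℝ E]

lemma isMaxOn_inner_closedBall {u : E} (hu : ‖u‖ = 1) (c : E) (r : ℝ) :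
    IsMaxOn (⟪u, ·⟫) (closedBall c r) (c + r • u) := by
  intro y hy
  have hyc : ‖y - c‖ ≤ r := by rwa [mem_closedBall, dist_eq_norm] at hy
  have := real_inner_le_norm u (y - c)
  rw [hu, one_mul, inner_sub_right] at this
  show ⟪u, y⟫ ≤ ⟪u, c + r • u⟫
  rw [inner_add_right, real_inner_smul_right, real_inner_self_eq_norm_sq, hu]
  linarith

lemma norm_smul_add_smul_sq {v w : E} (hv : ‖v‖ = 1) (hw : ‖w‖ = 1) (hvw : ⟪v, w⟫ = 0)
    (a b : ℝ) : ‖a • v + b • w‖ ^ 2 = a ^ 2 + b ^ 2 := by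
  rw [norm_add_sq_real, norm_smul, norm_smul, real_inner_smul_left, real_inner_smul_right,
    hvw, hv, hw]
  simp [sq_abs]

lemma norm_sub_le_iff_of_norm_sub_eq {r : ℝ} {o c x : E} (hr : 0 ≤ r) (hx : ‖x - o‖ = r) :
    ‖x - c‖ ≤ r ↔ ‖c - o‖ ^ 2 ≤ 2 * ⟪x - o, c - o⟫ := by
  have hsq : ‖x - c‖ ^ 2 = r ^ 2 - 2 * ⟪x - o, c - o⟫ + ‖c - o‖ ^ 2 := by
    rw [show x - c = (x - o) - (c - o) by abel, norm_sub_sq_real, hx]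
  rw [← sq_le_sq₀ (norm_nonneg _) hr, hsq]
  constructor <;> intro h <;> linarith

/- For points of the sphere, lying in `closedBall c r` is a linear condition
(`norm_sub_le_iff_of_norm_sub_eq`); adding it for `p` and `q` gives `⟪w, c - o⟫ ≥ 0`. -/
lemma norm_sub_le_of_mem_sphere {r t μ κ : ℝ} {o c p q z w : E} (hr : 0 ≤ r)
    (hp : ‖p - o‖ = r) (hq : ‖q - o‖ = r) (hz : ‖z - o‖ = r)
    (hpc : ‖p - c‖ ≤ r) (hqc : ‖q - c‖ ≤ r) (ht₀ : 0 ≤ t) (ht₁ : t ≤ 1) (hμ : 0 ≤ μ)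
    (hκ : 0 ≤ κ) (hpq : (p - o) + (q - o) = κ • w)
    (hzo : z - o = (1 - t) • (p - o) + t • (q - o) + μ • w) : ‖z - c‖ ≤ r := by
  rw [norm_sub_le_iff_of_norm_sub_eq hr hp] at hpc
  rw [norm_sub_le_iff_of_norm_sub_eq hr hq] at hqc
  rw [norm_sub_le_iff_of_norm_sub_eq hr hz, hzo]
  by_cases hco : c = o
  · simp [hco]
  have hm : 0 < ‖c - o‖ ^ 2 := by positivity [sub_ne_zero.2 hco]
  have hκw : 0 < κ * ⟪w, c - o⟫ := by
    have := congrArg (⟪·, c - o⟫) hpq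
    simp only [inner_add_left, real_inner_smul_left] at this
    linarith
  have hw : 0 ≤ ⟪w, c - o⟫ := (pos_of_mul_pos_right hκw hκ).le
  simp only [inner_add_left, real_inner_smul_left]
  nlinarith [mul_nonneg hμ hw]

/-- For orthonormal `v`, `w` and `0 ≤ d ≤ 2 r`, the arc of radius `r` from `p` (`t = 0`) to
`p + d • v` (`t = 1`) with centre `p + (d / 2) • v - √(r ^ 2 - d ^ 2 / 4) • w`, parametrised by
the component along `v`. -/
def arcPoint (r d : ℝ) (p v w : E) (t : ℝ) : E :=
  p + (t * d) • v + (√(r ^ 2 - (t - 1 / 2) ^ 2 * d ^ 2) - √(r ^ 2 - d ^ 2 / 4)) • w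

lemma arcPoint_mem_closedBall {r d t : ℝ} {c p v w : E} (hv : ‖v‖ = 1) (hw : ‖w‖ = 1)
    (hvw : ⟪v, w⟫ = 0) (hd : 0 ≤ d) (hdr : d ≤ 2 * r) (ht₀ : 0 ≤ t) (ht₁ : t ≤ 1)
    (hpc : ‖p - c‖ ≤ r) (hqc : ‖p + d • v - c‖ ≤ r) : ‖arcPoint r d p v w t - c‖ ≤ r := by
  have hr : 0 ≤ r := by linarith
  have ht : (t - 1 / 2) ^ 2 ≤ 1 / 4 := by nlinarith
  set h := √(r ^ 2 - d ^ 2 / 4)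
  set A := r ^ 2 - (t - 1 / 2) ^ 2 * d ^ 2 with hA_def
  have hA₀ : 0 ≤ A := by nlinarith [mul_le_mul_of_nonneg_right ht (sq_nonneg d)]
  have hh : h ^ 2 = r ^ 2 - d ^ 2 / 4 := Real.sq_sqrt (by nlinarith)
  have hA : √A ^ 2 = A := Real.sq_sqrt hA₀
  have hhA : h ≤ √A :=
    Real.sqrt_le_sqrt (by nlinarith [mul_le_mul_of_nonneg_right ht (sq_nonneg d)])
  have norm_eq {x : E} {a b : ℝ} (hx : x = a • v + b • w) (hab : a ^ 2 + b ^ 2 = r ^ 2) :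
      ‖x‖ = r := by
    rw [← sq_eq_sq₀ (norm_nonneg _) hr, hx, norm_smul_add_smul_sq hv hw hvw, hab]
  set o := p + (d / 2) • v - h • w with ho
  refine norm_sub_le_of_mem_sphere (o := o) (q := p + d • v) (κ := 2 * h) (μ := √A - h)
    (w := w) hr
    (norm_eq (a := -(d / 2)) (b := h) (by rw [ho]; module) (by linarith))
    (norm_eq (a := d / 2) (b := h) (by rw [ho]; module) (by linarith))
    (norm_eq (a := t * d - d / 2) (b := √A) (by rw [arcPoint, ho]; module)
      (by rw [hA, hA_def]; ring))
    hpc hqc ht₀ ht₁ (by linarith) (by positivity) (by rw [ho]; module)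
    (by rw [arcPoint, ho]; module)

lemma exists_norm_eq_one_inner_eq_zero_inner_eq {u v : E} (hu : ‖u‖ = 1) (hv : ‖v‖ = 1)
    (huv : |⟪u, v⟫| < 1) : ∃ w : E, ‖w‖ = 1 ∧ ⟪v, w⟫ = 0 ∧ ⟪u, w⟫ = √(1 - ⟪u, v⟫ ^ 2) := by
  set s := ⟪u, v⟫ with hs_def
  have hc : 0 < √(1 - s ^ 2) := Real.sqrt_pos.2 (by nlinarith [abs_lt.1 huv])
  have hnorm : ‖u - s • v‖ = √(1 - s ^ 2) := by
    rw [← sq_eq_sq₀ (norm_nonneg _) hc.le, Real.sq_sqrt (by nlinarith [abs_lt.1 huv]),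
      norm_sub_sq_real, real_inner_smul_right, norm_smul, hu, hv, Real.norm_eq_abs, mul_one,
      sq_abs]
    ring
  refine ⟨(√(1 - s ^ 2))⁻¹ • (u - s • v), ?_, ?_, ?_⟩
  · rw [norm_smul, hnorm, norm_inv, Real.norm_of_nonneg hc.le, inv_mul_cancel₀ hc.ne']
  · rw [real_inner_smul_right, inner_sub_right, real_inner_smul_right, real_inner_comm,
      real_inner_self_eq_norm_sq, hv]
    ring
  · rw [real_inner_smul_right, inner_sub_right, real_inner_smul_right,
      real_inner_self_eq_norm_sq, hu, inv_mul_eq_iff_eq_mul₀ hc.ne',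
      Real.mul_self_sqrt (by nlinarith [abs_lt.1 huv])]
    ring

lemma norm_smul_add_smul_le {u v : E} {d r : ℝ} (hu : ‖u‖ = 1) (hv : ‖v‖ = 1) (hd : 0 ≤ d)
    (hr : 0 ≤ r) (h : d ≤ 2 * r * -⟪u, v⟫) : ‖d • v + r • u‖ ≤ r := by
  rw [← sq_le_sq₀ (norm_nonneg _) hr, norm_add_sq_real, norm_smul, norm_smul, hu, hv,
    real_inner_smul_left, real_inner_smul_right, real_inner_comm, Real.norm_of_nonneg hd,
    Real.norm_of_nonneg hr]
  nlinarith

/- Multiplied by `√(r ^ 2 - (t - 1 / 2) ^ 2 * d ^ 2) + √(r ^ 2 - d ^ 2 / 4)`, the left side of `h`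
becomes `t * G t` with `G` continuous and `G 0` equal to `d` times the left side of the goal. -/
lemma arc_tangent_nonpos {r d s c : ℝ} (hd : 0 < d) (hdr : d ≤ 2 * r)
    (h : ∀ t ∈ Ioo (0 : ℝ) 1,
      t * d * s + (√(r ^ 2 - (t - 1 / 2) ^ 2 * d ^ 2) - √(r ^ 2 - d ^ 2 / 4)) * c ≤ 0) :
    2 * √(r ^ 2 - d ^ 2 / 4) * s + d * c ≤ 0 := by
  set h₀ := √(r ^ 2 - d ^ 2 / 4)
  have hh₀ : h₀ ^ 2 = r ^ 2 - d ^ 2 / 4 := Real.sq_sqrt (by nlinarith)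
  let G : ℝ → ℝ := fun t ↦ d * s * (√(r ^ 2 - (t - 1 / 2) ^ 2 * d ^ 2) + h₀) + (1 - t) * d ^ 2 * c
  have hG : ∀ t ∈ Ioo (0 : ℝ) 1, G t ≤ 0 := by
    rintro t ⟨ht₀, ht₁⟩
    have hA : √(r ^ 2 - (t - 1 / 2) ^ 2 * d ^ 2) ^ 2 = h₀ ^ 2 + d ^ 2 * (t * (1 - t)) := by
      rw [Real.sq_sqrt (by nlinarith [mul_pos ht₀ (sub_pos.2 ht₁)]), hh₀]; ring
    have htG : t * G t =
        (t * d * s + (√(r ^ 2 - (t - 1 / 2) ^ 2 * d ^ 2) - h₀) * c) *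
          (√(r ^ 2 - (t - 1 / 2) ^ 2 * d ^ 2) + h₀) := by
      linear_combination (-c) * hA
    have : t * G t ≤ 0 := htG ▸ mul_nonpos_of_nonpos_of_nonneg (h t ⟨ht₀, ht₁⟩) (by positivity)
    exact nonpos_of_mul_nonpos_right this ht₀
  have hGc : Continuous G := by fun_prop
  have hG₀ : G 0 ≤ 0 := by
    have := (isClosed_le hGc continuous_const).closure_subset_iff.2 hG
    rw [closure_Ioo zero_ne_one] at this
    exact this ⟨le_rfl, zero_le_one⟩
  have : G 0 = d * (2 * h₀ * s + d * c) := by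
    simp only [G]
    rw [show r ^ 2 - (0 - 1 / 2) ^ 2 * d ^ 2 = r ^ 2 - d ^ 2 / 4 by ring]
    ring
  nlinarith

lemma le_two_mul_neg_of_arc_tangent_nonpos {r d s : ℝ} (hd : 0 < d) (hs₁ : -1 ≤ s) (hs : s ≤ 0)
    (hdr : d ≤ 2 * r) (h : 2 * √(r ^ 2 - d ^ 2 / 4) * s + d * √(1 - s ^ 2) ≤ 0) :
    d ≤ 2 * r * -s := by
  have h₁ : d * √(1 - s ^ 2) ≤ 2 * √(r ^ 2 - d ^ 2 / 4) * -s := by linarith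
  have h₂ := mul_self_le_mul_self (by positivity) h₁
  have hc := Real.sq_sqrt (show 0 ≤ 1 - s ^ 2 by nlinarith)
  have hh := Real.sq_sqrt (show 0 ≤ r ^ 2 - d ^ 2 / 4 by nlinarith)
  have : d ^ 2 ≤ (2 * r * -s) ^ 2 := by nlinarith
  exact abs_le_of_sq_le_sq' this (by nlinarith) |>.2

lemma subset_closedBall_sub_smul_of_isMaxOn {r : ℝ} {C K : Set E} {u p : E} (hr : 0 < r)
    (hC : C.Nonempty) (hK : K = ⋂ c ∈ C, closedBall c r) (hu : ‖u‖ = 1) (hp : p ∈ K)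
    (hmax : IsMaxOn (⟪u, ·⟫) K p) : K ⊆ closedBall (p - r • u) r := by
  have hball {x : E} (hx : x ∈ K) {c : E} (hc : c ∈ C) : ‖x - c‖ ≤ r := by
    rw [hK] at hx
    simpa [dist_eq_norm] using mem_iInter₂.1 hx c hc
  intro q hq
  rw [mem_closedBall, dist_eq_norm]
  by_cases hqp : q = p
  · simp [hqp, norm_smul, hu, abs_of_pos hr]
  set d := ‖q - p‖
  have hd : 0 < d := norm_pos_iff.2 (sub_ne_zero.2 hqp)
  obtain ⟨v, hv, hq_eq⟩ : ∃ v : E, ‖v‖ = 1 ∧ q = p + d • v :=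
    ⟨d⁻¹ • (q - p), by rw [norm_smul, norm_inv, norm_norm, inv_mul_cancel₀ hd.ne'],
      by rw [smul_inv_smul₀ hd.ne']; abel⟩
  obtain ⟨c₀, hc₀⟩ := hC
  have hdr : d ≤ 2 * r := by
    calc d = ‖(q - c₀) - (p - c₀)‖ := by rw [sub_sub_sub_cancel_right]
      _ ≤ ‖q - c₀‖ + ‖p - c₀‖ := norm_sub_le _ _
      _ ≤ 2 * r := by linarith [hball hq hc₀, hball hp hc₀]
  set s := ⟪u, v⟫ with hs_def
  have hs : s ≤ 0 := by
    have : ⟪u, q⟫ ≤ ⟪u, p⟫ := hmax hq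
    rw [hq_eq, inner_add_right, real_inner_smul_right] at this
    nlinarith
  have hs₁ : -1 ≤ s := by
    have := abs_real_inner_le_norm u v
    rw [hu, hv, one_mul] at this
    exact (abs_le.1 this).1
  suffices d ≤ 2 * r * -s by
    rw [hq_eq, show p + d • v - (p - r • u) = d • v + r • u by abel]
    exact norm_smul_add_smul_le hu hv hd.le hr.le this
  rcases hs₁.eq_or_lt with hs₁' | hs₁'
  · rw [← hs₁']; linarith
  obtain ⟨w, hw, hvw, huw⟩ :=
    exists_norm_eq_one_inner_eq_zero_inner_eq hu hv (abs_lt.2 ⟨hs₁', by linarith⟩)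
  refine le_two_mul_neg_of_arc_tangent_nonpos hd hs₁ hs hdr
    (arc_tangent_nonpos hd hdr fun t ht ↦ ?_)
  have harc : arcPoint r d p v w t ∈ K := by
    rw [hK]
    refine mem_iInter₂.2 fun c hc ↦ ?_
    rw [mem_closedBall, dist_eq_norm]
    exact arcPoint_mem_closedBall hv hw hvw hd.le hdr ht.1.le ht.2.le (hball hp hc)
      (hq_eq ▸ hball hq hc)
  have : ⟪u, arcPoint r d p v w t⟫ ≤ ⟪u, p⟫ := hmax harc
  rw [arcPoint, inner_add_right, inner_add_right, real_inner_smul_right,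
    real_inner_smul_right, huw, ← hs_def] at this
  linarith

end InnerProductSpace

lemma suppFn_eq_of_isMaxOn {n : ℕ} {K : Set (Euc n)} {u x : Euc n} (hx : x ∈ K)
    (hmax : IsMaxOn (⟪u, ·⟫) K x) : suppFn K u = ⟪u, x⟫ :=
  IsGreatest.csSup_eq ⟨mem_image_of_mem _ hx, by rintro _ ⟨y, hy, rfl⟩; exact hmax hy⟩

theorem stmt1 {n : ℕ} (lam : ℝ) (hlam : 0 < lam) (K : Set (Euc n))
    (hK : IsLamConvex lam K) (u : Euc n) (hu : ‖u‖ = 1) :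
    suppFn K u + suppFn (lamDual lam K) (-u) = 1/lam := by
  obtain ⟨⟨hKc, -, hKint⟩, C, hC, hKC⟩ := hK
  obtain ⟨p, hp, hmax⟩ := hKc.exists_isMaxOn (hKint.mono interior_subset)
    (continuous_const.inner continuous_id : Continuous (⟪u, ·⟫)).continuousOn
  have hball := subset_closedBall_sub_smul_of_isMaxOn (by positivity) hC hKC hu hp hmax
  have hmem : p - (1 / lam) • u ∈ lamDual lam K :=
    mem_iInter₂.2 fun x hx ↦ mem_closedBall_comm.1 (hball hx)
  have hdual : IsMaxOn (⟪-u, ·⟫) (lamDual lam K) (p - (1 / lam) • u) := by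
    rw [sub_eq_add_neg, ← smul_neg]
    exact (isMaxOn_inner_closedBall (by rwa [norm_neg]) p _).on_subset
      fun y hy ↦ mem_iInter₂.1 hy p hp
  rw [suppFn_eq_of_isMaxOn hp hmax, suppFn_eq_of_isMaxOn hmem hdual, inner_neg_left,
    inner_sub_right, real_inner_smul_right, real_inner_self_eq_norm_sq, hu]
  ring
end
end

section
/- Let λ > 0 and let K ⊂ ℝⁿ be a λ-convex body. Then the λ-duality is an involution: (K^λ)^λ = K. -/
open Metric Set MeasureTheory Pointwise RealInnerProductSpace

noncomputable section

/-!
Duality with respect to balls of a fixed radius is a Galois connection: `s` lies in the dual of `t`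
exactly when `t` lies in the dual of `s`. Hence `K` lies in its double dual, and if
`K = ⋂ c ∈ C, closedBall c (1/λ)` then `C` lies in the dual of `K`, so by antitonicity the double
dual of `K` lies in the dual of `C`, which is `K`.
-/

section BallDuality

variable {α : Type*} [PseudoMetricSpace α] (r : ℝ)

theorem subset_biInter_closedBall_swap {s t : Set α} (h : s ⊆ ⋂ x ∈ t, closedBall x r) :
    t ⊆ ⋂ x ∈ s, closedBall x r :=
  fun y hy => mem_iInter₂.2 fun _ hx => mem_closedBall'.2 (mem_iInter₂.1 (h hx) y hy)

theorem subset_biInter_closedBall_biInter_closedBall (s : Set α) :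
    s ⊆ ⋂ y ∈ ⋂ x ∈ s, closedBall x r, closedBall y r :=
  subset_biInter_closedBall_swap r subset_rfl

theorem biInter_closedBall_biInter_closedBall_of_eq {K C : Set α}
    (hK : K = ⋂ c ∈ C, closedBall c r) :
    ⋂ y ∈ ⋂ x ∈ K, closedBall x r, closedBall y r = K := by
  have hC : C ⊆ ⋂ x ∈ K, closedBall x r := subset_biInter_closedBall_swap r hK.subset
  exact ((biInter_subset_biInter_left hC).trans_eq hK.symm).antisymm
    (subset_biInter_closedBall_biInter_closedBall r K)

end BallDuality

theorem stmt3_general {n : ℕ} (lam : ℝ) (K : Set (Euc n))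
    (hK : IsLamConvex lam K) :
    lamDual lam (lamDual lam K) = K := by
  obtain ⟨-, C, -, hC⟩ := hK
  exact biInter_closedBall_biInter_closedBall_of_eq (1 / lam) hC

theorem stmt3 {n : ℕ} (lam : ℝ) (hlam : 0 < lam) (K : Set (Euc n))
    (hK : IsLamConvex lam K) :
    lamDual lam (lamDual lam K) = K :=
  stmt3_general lam K hK
end
end

section
/- Let f : [0, π/2] → ℝ be continuous and strictly increasing, and let q : [0, π/2] → ℝ be continuous, nonnegative, and strictly increasing with q not identically zero. Suppose ∫₀^{π/2} f(t) q(t) dt = 0. Then for every φ ∈ [0, π/2], ∫₀^{φ} f(t) q(t) dt ≤ 0, with equality if and only if φ = 0 or φ = π/2. -/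
open Metric Set MeasureTheory Pointwise RealInnerProductSpace

noncomputable section

lemma intervalIntegral_neg_of_neg_on {g : ℝ → ℝ} {a b : ℝ}
    (hgi : IntervalIntegrable g volume a b) (hneg : ∀ x ∈ Ioo a b, g x < 0) (hab : a < b) :
    ∫ x in a..b, g x < 0 := by
  have := intervalIntegral.intervalIntegral_pos_of_pos_on hgi.neg
    (fun x hx => neg_pos.mpr (hneg x hx)) hab
  simp only [Pi.neg_apply, intervalIntegral.integral_neg, neg_pos] at this
  exact this

/-- According to the sign of `f c`, either `f q < 0` on `(a, c)`, or `f q > 0` on `(c, b)` and then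
`∫ a..c = -∫ c..b`. -/
lemma intervalIntegral_mul_neg_of_strictMonoOn {f q : ℝ → ℝ} {a b c : ℝ}
    (hi : IntervalIntegrable (fun t => f t * q t) volume a b) (hf : StrictMonoOn f (Icc a b))
    (hq : ∀ t ∈ Ioo a b, 0 < q t) (hint : ∫ t in a..b, f t * q t = 0) (hc : c ∈ Ioo a b) :
    ∫ t in a..c, f t * q t < 0 := by
  have hcab : c ∈ uIcc a b := Icc_subset_uIcc (Ioo_subset_Icc_self hc)
  have hac := hi.mono_set (uIcc_subset_uIcc left_mem_uIcc hcab)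
  have hcb := hi.mono_set (uIcc_subset_uIcc hcab right_mem_uIcc)
  rcases le_or_gt (f c) 0 with hfc | hfc
  · refine intervalIntegral_neg_of_neg_on hac (fun t ht => ?_) hc.1
    have hft : f t < f c := hf ⟨ht.1.le, ht.2.le.trans hc.2.le⟩ (Ioo_subset_Icc_self hc) ht.2
    exact mul_neg_of_neg_of_pos (hft.trans_le hfc) (hq t ⟨ht.1, ht.2.trans hc.2⟩)
  · have hpos : 0 < ∫ t in c..b, f t * q t := by
      refine intervalIntegral.intervalIntegral_pos_of_pos_on hcb (fun t ht => ?_) hc.2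
      have hft : f c < f t := hf (Ioo_subset_Icc_self hc) ⟨hc.1.le.trans ht.1.le, ht.2.le⟩ ht.1
      exact mul_pos (hfc.trans hft) (hq t ⟨hc.1.trans ht.1, ht.2⟩)
    have hsplit := intervalIntegral.integral_add_adjacent_intervals hac hcb
    linarith

open Real in
theorem stmt9_general (f q : ℝ → ℝ)
    (hfc : ContinuousOn f (Icc 0 (π/2))) (hfm : StrictMonoOn f (Icc 0 (π/2)))
    (hqc : ContinuousOn q (Icc 0 (π/2))) (hq0 : ∀ t ∈ Icc (0:ℝ) (π/2), 0 ≤ q t)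
    (hqm : StrictMonoOn q (Icc 0 (π/2)))
    (hint : (∫ t in (0:ℝ)..(π/2), f t * q t) = 0) :
    ∀ φ ∈ Icc (0:ℝ) (π/2),
      (∫ t in (0:ℝ)..φ, f t * q t) ≤ 0 ∧
        ((∫ t in (0:ℝ)..φ, f t * q t) = 0 ↔ φ = 0 ∨ φ = π/2) := by
  have hπ : (0:ℝ) < π/2 := by positivity
  have hq : ∀ t ∈ Ioo (0:ℝ) (π/2), 0 < q t := fun t ht =>
    (hq0 0 (left_mem_Icc.mpr hπ.le)).trans_lt
      (hqm (left_mem_Icc.mpr hπ.le) (Ioo_subset_Icc_self ht) ht.1)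
  have hi : IntervalIntegrable (fun t => f t * q t) volume 0 (π/2) :=
    (hfc.mul hqc).intervalIntegrable_of_Icc hπ.le
  rintro φ ⟨h0, hπ2⟩
  rcases h0.eq_or_lt with rfl | h0
  · simp
  rcases hπ2.eq_or_lt with rfl | hπ2
  · simp [hint]
  have hneg := intervalIntegral_mul_neg_of_strictMonoOn hi hfm hq hint ⟨h0, hπ2⟩
  exact ⟨hneg.le, iff_of_false hneg.ne (by rintro (rfl | rfl); exacts [h0.false, hπ2.false])⟩

open Real in
theorem stmt9 (f q : ℝ → ℝ)
    (hfc : ContinuousOn f (Icc 0 (π/2))) (hfm : StrictMonoOn f (Icc 0 (π/2)))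
    (hqc : ContinuousOn q (Icc 0 (π/2))) (hq0 : ∀ t ∈ Icc (0:ℝ) (π/2), 0 ≤ q t)
    (hqm : StrictMonoOn q (Icc 0 (π/2)))
    (hqne : ∃ t ∈ Icc (0:ℝ) (π/2), q t ≠ 0)
    (hint : (∫ t in (0:ℝ)..(π/2), f t * q t) = 0) :
    ∀ φ ∈ Icc (0:ℝ) (π/2),
      (∫ t in (0:ℝ)..φ, f t * q t) ≤ 0 ∧
        ((∫ t in (0:ℝ)..φ, f t * q t) = 0 ↔ φ = 0 ∨ φ = π/2) :=
  stmt9_general f q hfc hfm hqc hq0 hqm hint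
end
end

section
/- Let n ≥ 2, and let h : [0, π/2] → ℝ be continuous and strictly increasing. Define q(t) = sin(t)^{n−2} and A = (∫₀^{π/2} h(t)q(t)dt)/(∫₀^{π/2} q(t)dt). Then for every measurable function φ : S^{n−2} → [0, π/2], ∫_{S^{n−2}} ∫₀^{φ(θ)} h(t)q(t) dt dθ ≤ A · ∫_{S^{n−2}} ∫₀^{φ(θ)} q(t) dt dθ. -/
open Metric Set MeasureTheory Pointwise RealInnerProductSpace

noncomputable section

/-!
For `x ∈ [0, π/2]`, monotonicity of `h` gives `∫₀ˣ h q ≤ h(x) ∫₀ˣ q` and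
`h(x) ∫ₓ^{π/2} q ≤ ∫ₓ^{π/2} h q`; cross-multiplying yields the Chebyshev-type pointwise bound
`∫₀ˣ h q ≤ A ∫₀ˣ q`, which is integrated against the Hausdorff measure on the sphere.
That integration needs the sphere `S^k ⊆ ℝ^{k+1}` to have finite `k`-dimensional Hausdorff
measure: the radial projection `z ↦ z / ‖z‖`, which is 2-Lipschitz outside the open unit ball,
maps the boundary of the cube `[-1, 1]^{k+1}`, a union of `2(k+1)` isometric copies of
`[-1, 1]^k`, onto the sphere.
-/

open scoped NNReal

lemma lipschitzOnWith_inv_norm_smul {E : Type*} [NormedAddCommGroup E] [NormedSpace ℝ E] :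
    LipschitzOnWith 2 (fun z : E => ‖z‖⁻¹ • z) {z | 1 ≤ ‖z‖} := by
  refine LipschitzOnWith.of_dist_le_mul fun z hz w hw => ?_
  simp only [mem_ofPred_eq] at hz hw
  have hz0 : 0 < ‖z‖ := one_pos.trans_le hz
  have hw0 : 0 < ‖w‖ := one_pos.trans_le hw
  have hsplit :
      ‖z‖⁻¹ • z - ‖w‖⁻¹ • w = ‖z‖⁻¹ • (z - w) + ((‖w‖ - ‖z‖) / ‖z‖) • (‖w‖⁻¹ • w) := by
    have hcoef : (‖w‖ - ‖z‖) / ‖z‖ * ‖w‖⁻¹ = ‖z‖⁻¹ - ‖w‖⁻¹ := by field_simp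
    rw [smul_smul, hcoef, smul_sub, sub_smul]
    abel
  have hunit : ‖‖w‖⁻¹ • w‖ = 1 := by rw [norm_smul, norm_inv, norm_norm, inv_mul_cancel₀ hw0.ne']
  have hnorms : |‖w‖ - ‖z‖| ≤ ‖z - w‖ := by rw [abs_sub_comm]; exact abs_norm_sub_norm_le z w
  rw [dist_eq_norm, dist_eq_norm, hsplit]
  calc ‖‖z‖⁻¹ • (z - w) + ((‖w‖ - ‖z‖) / ‖z‖) • (‖w‖⁻¹ • w)‖
      ≤ ‖z - w‖ / ‖z‖ + |‖w‖ - ‖z‖| / ‖z‖ := by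
        refine (norm_add_le _ _).trans_eq ?_
        rw [norm_smul, norm_smul, hunit, norm_inv, norm_norm, Real.norm_eq_abs, abs_div,
          abs_of_pos hz0, mul_one, inv_mul_eq_div]
    _ ≤ ‖z - w‖ + ‖z - w‖ :=
        add_le_add (div_le_self (norm_nonneg _) hz) ((div_le_self (abs_nonneg _) hz).trans hnorms)
    _ = (2 : ℝ≥0) * ‖z - w‖ := by push_cast; ring

def unitCube (k : ℕ) : Set (Euc k) :=
  WithLp.toLp 2 '' univ.pi fun _ => Icc (-1) 1

lemma isCompact_unitCube (k : ℕ) : IsCompact (unitCube k) :=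
  (isCompact_univ_pi fun _ => isCompact_Icc).image (PiLp.continuous_toLp 2 _)

def insertCoord {k : ℕ} (i : Fin (k + 1)) (σ : ℝ) (y : Euc k) : Euc (k + 1) :=
  WithLp.toLp 2 (Fin.insertNth i σ (WithLp.ofLp y))

lemma isometry_insertCoord {k : ℕ} (i : Fin (k + 1)) (σ : ℝ) : Isometry (insertCoord i σ) := by
  refine Isometry.of_dist_eq fun y y' => ?_
  simp only [EuclideanSpace.dist_eq, insertCoord, Fin.sum_univ_succAbove _ i,
    Fin.insertNth_apply_same, Fin.insertNth_apply_succAbove, dist_self]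
  simp

lemma sphere_subset_iUnion_insertCoord (k : ℕ) :
    sphere (0 : Euc (k + 1)) 1 ⊆ ⋃ i ∈ (univ : Set (Fin (k + 1))), ⋃ σ ∈ ({-1, 1} : Set ℝ),
      (fun z => ‖z‖⁻¹ • z) '' (insertCoord i σ '' unitCube k) := by
  intro x hx
  rw [mem_sphere_zero_iff_norm] at hx
  obtain ⟨i, -, hi⟩ := Finset.exists_max_image Finset.univ (fun j => |x j|) Finset.univ_nonempty
  set c := |x i|
  have hc : 0 < c := by
    by_contra! hc0
    have : x = 0 := by
      ext j; exact abs_nonpos_iff.mp ((hi j (Finset.mem_univ j)).trans hc0)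
    simp [this] at hx
  have hσ : x i / c ∈ ({-1, 1} : Set ℝ) := by
    rcases abs_choice (x i) with h | h
    · right; rw [← h]; exact div_self hc.ne'
    · left
      rw [show c = -x i from h]
      exact div_neg_self (by rw [← neg_ne_zero, ← h]; exact hc.ne')
  have hface :
      insertCoord i (x i / c) (WithLp.toLp 2 fun j => x (i.succAbove j) / c) = c⁻¹ • x := by
    ext j
    refine Fin.succAboveCases i ?_ (fun l => ?_) j <;>
      simp [insertCoord, div_eq_inv_mul]
  simp only [mem_iUnion, mem_image]
  refine ⟨i, mem_univ _, _, hσ, _, ⟨_, ⟨_, fun j _ => ?_, rfl⟩, hface⟩, ?_⟩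
  · rw [mem_Icc, ← abs_le, abs_div, abs_of_pos hc, div_le_one hc]
    exact hi _ (Finset.mem_univ _)
  · rw [norm_smul, hx, mul_one, norm_inv, Real.norm_eq_abs, abs_of_pos hc, inv_inv, smul_smul,
      mul_inv_cancel₀ hc.ne', one_smul]

lemma hausdorffMeasure_sphere_lt_top (k : ℕ) :
    μH[(k : ℝ)] (sphere (0 : Euc (k + 1)) 1) < ⊤ := by
  refine (measure_mono (sphere_subset_iUnion_insertCoord k)).trans_lt <|
    measure_biUnion_lt_top finite_univ fun i _ => measure_biUnion_lt_top (toFinite _) fun σ hσ => ?_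
  have hσ1 : |σ| = 1 := by rcases hσ with rfl | rfl <;> norm_num
  have hface_norm : insertCoord i σ '' unitCube k ⊆ {z : Euc (k + 1) | 1 ≤ ‖z‖} := by
    rintro _ ⟨y, -, rfl⟩
    simpa [insertCoord, hσ1] using PiLp.norm_apply_le (insertCoord i σ y) i
  refine ((lipschitzOnWith_inv_norm_smul.mono hface_norm).hausdorffMeasure_image_le
    k.cast_nonneg).trans_lt (ENNReal.mul_lt_top (by simp) ?_)
  rw [(isometry_insertCoord i σ).hausdorffMeasure_image (Or.inl k.cast_nonneg)]
  exact (isCompact_unitCube k).measure_lt_top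

section Chebyshev

variable {a b : ℝ} {h q : ℝ → ℝ}

lemma integral_mul_integral_le_of_monotoneOn (hh : ContinuousOn h (Icc a b))
    (hmono : MonotoneOn h (Icc a b)) (hq : ContinuousOn q (Icc a b))
    (hq0 : ∀ t ∈ Icc a b, 0 ≤ q t) {x : ℝ} (hx : x ∈ Icc a b) :
    (∫ t in a..x, h t * q t) * (∫ t in a..b, q t)
      ≤ (∫ t in a..b, h t * q t) * ∫ t in a..x, q t := by
  have hintegrable : ∀ {u v}, a ≤ u → u ≤ v → v ≤ b →
      IntervalIntegrable (fun t => h t * q t) volume u v ∧ IntervalIntegrable q volume u v :=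
    fun hu huv hv => ⟨((hh.mul hq).mono (Icc_subset_Icc hu hv)).intervalIntegrable_of_Icc huv,
      (hq.mono (Icc_subset_Icc hu hv)).intervalIntegrable_of_Icc huv⟩
  obtain ⟨hax, hxb⟩ := hx
  obtain ⟨hfl, hql⟩ := hintegrable le_rfl hax hxb
  obtain ⟨hfr, hqr⟩ := hintegrable hax hxb le_rfl
  have hleft : ∫ t in a..x, h t * q t ≤ h x * ∫ t in a..x, q t := by
    rw [← intervalIntegral.integral_const_mul]
    refine intervalIntegral.integral_mono_on hax hfl (hql.const_mul _) fun t ht => ?_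
    have htI : t ∈ Icc a b := ⟨ht.1, ht.2.trans hxb⟩
    exact mul_le_mul_of_nonneg_right (hmono htI ⟨hax, hxb⟩ ht.2) (hq0 t htI)
  have hright : h x * ∫ t in x..b, q t ≤ ∫ t in x..b, h t * q t := by
    rw [← intervalIntegral.integral_const_mul]
    refine intervalIntegral.integral_mono_on hxb (hqr.const_mul _) hfr fun t ht => ?_
    have htI : t ∈ Icc a b := ⟨hax.trans ht.1, ht.2⟩
    exact mul_le_mul_of_nonneg_right (hmono ⟨hax, hxb⟩ htI ht.1) (hq0 t htI)
  have hql0 : 0 ≤ ∫ t in a..x, q t :=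
    intervalIntegral.integral_nonneg hax fun t ht => hq0 t ⟨ht.1, ht.2.trans hxb⟩
  have hqr0 : 0 ≤ ∫ t in x..b, q t :=
    intervalIntegral.integral_nonneg hxb fun t ht => hq0 t ⟨hax.trans ht.1, ht.2⟩
  rw [← intervalIntegral.integral_add_adjacent_intervals hfl hfr,
    ← intervalIntegral.integral_add_adjacent_intervals hql hqr]
  nlinarith [mul_le_mul_of_nonneg_right hleft hqr0, mul_le_mul_of_nonneg_right hright hql0]

lemma continuousOn_primitive_Icc_of_continuousOn {f : ℝ → ℝ} (hf : ContinuousOn f (Icc a b)) :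
    ContinuousOn (fun x => ∫ t in a..x, f t) (Icc a b) := by
  rcases le_total a b with hab | hba
  · have := intervalIntegral.continuousOn_primitive_interval'
      (hf.intervalIntegrable_of_Icc (μ := volume) hab) left_mem_uIcc
    rwa [uIcc_of_le hab] at this
  · exact (subsingleton_Icc_of_ge hba).continuousOn _

lemma ContinuousOn.integrable_comp_of_forall_mem {X α : Type*} [TopologicalSpace X]
    [MeasurableSpace X] [OpensMeasurableSpace X] [MeasurableSpace α] {μ : Measure α}
    [IsFiniteMeasure μ]
    {s : Set X} {F : X → ℝ} (hs : IsCompact s) (hF : ContinuousOn F s) {φ : α → X}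
    (hφ : Measurable φ) (hφs : ∀ x, φ x ∈ s) : Integrable (fun x => F (φ x)) μ := by
  obtain ⟨C, hC⟩ := hs.exists_bound_of_continuousOn hF
  have hmeas : Measurable fun x => F (φ x) :=
    hF.domRestrict.measurable.comp (hφ.subtype_mk (h := hφs))
  exact Integrable.of_bound hmeas.aestronglyMeasurable C (ae_of_all _ fun x => hC _ (hφs x))

theorem integral_integral_mul_le_average_mul {α : Type*} [MeasurableSpace α] (μ : Measure α)
    [IsFiniteMeasure μ] (hh : ContinuousOn h (Icc a b)) (hmono : MonotoneOn h (Icc a b))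
    (hq : ContinuousOn q (Icc a b)) (hq0 : ∀ t ∈ Icc a b, 0 ≤ q t) (hqpos : 0 < ∫ t in a..b, q t)
    {φ : α → ℝ} (hφ : Measurable φ) (hφs : ∀ x, φ x ∈ Icc a b) :
    ∫ x, (∫ t in a..φ x, h t * q t) ∂μ
      ≤ ((∫ t in a..b, h t * q t) / ∫ t in a..b, q t) * ∫ x, (∫ t in a..φ x, q t) ∂μ := by
  have hpointwise : ∀ x, ∫ t in a..φ x, h t * q t
      ≤ ((∫ t in a..b, h t * q t) / ∫ t in a..b, q t) * ∫ t in a..φ x, q t := fun x => by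
    rw [div_mul_eq_mul_div, le_div_iff₀ hqpos]
    exact integral_mul_integral_le_of_monotoneOn hh hmono hq hq0 (hφs x)
  have hintegrable : ∀ {f : ℝ → ℝ}, ContinuousOn f (Icc a b) →
      Integrable (fun x => ∫ t in a..φ x, f t) μ := fun hf =>
    (continuousOn_primitive_Icc_of_continuousOn hf).integrable_comp_of_forall_mem isCompact_Icc hφ hφs
  rw [← integral_const_mul]
  exact integral_mono (hintegrable (hh.mul hq)) ((hintegrable hq).const_mul _) hpointwise

end Chebyshev

open Real in
lemma integral_sin_pow_pos_pi_div_two (k : ℕ) : 0 < ∫ t in (0 : ℝ)..(π / 2), sin t ^ k :=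
  intervalIntegral.intervalIntegral_pos_of_pos_on ((continuous_sin.pow k).intervalIntegrable _ _)
    (fun t ht => pow_pos (sin_pos_of_pos_of_lt_pi ht.1 (ht.2.trans (half_lt_self pi_pos))) k)
    (by positivity)

open Real in
theorem stmt10 {n : ℕ} (hn : 2 ≤ n) (h : ℝ → ℝ)
    (hc : ContinuousOn h (Icc 0 (π/2))) (hm : StrictMonoOn h (Icc 0 (π/2)))
    (φ : Euc (n-1) → ℝ) (hφ : Measurable φ)
    (hφr : ∀ θ, φ θ ∈ Icc (0:ℝ) (π/2)) :
    (∫ θ in sphere (0 : Euc (n-1)) 1,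
        (∫ t in (0:ℝ)..(φ θ), h t * Real.sin t ^ (n-2)) ∂(μH[(n:ℝ) - 2]))
      ≤ ((∫ t in (0:ℝ)..(π/2), h t * Real.sin t ^ (n-2))
            / (∫ t in (0:ℝ)..(π/2), Real.sin t ^ (n-2)))
          * ∫ θ in sphere (0 : Euc (n-1)) 1,
              (∫ t in (0:ℝ)..(φ θ), Real.sin t ^ (n-2)) ∂(μH[(n:ℝ) - 2]) := by
  obtain ⟨k, rfl⟩ : ∃ k, n = k + 2 := ⟨n - 2, by omega⟩
  rw [show ((k + 2 : ℕ) : ℝ) - 2 = k by push_cast; ring]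
  have : IsFiniteMeasure ((μH[(k : ℝ)]).restrict (sphere (0 : Euc (k + 1)) 1)) :=
    isFiniteMeasure_restrict.mpr (hausdorffMeasure_sphere_lt_top k).ne
  exact integral_integral_mul_le_average_mul (q := fun t => sin t ^ (k + 2 - 2)) _ hc
    hm.monotoneOn (continuous_sin.pow _).continuousOn
    (fun t ht => pow_nonneg
      (sin_nonneg_of_nonneg_of_le_pi ht.1 (ht.2.trans (half_le_self pi_pos.le))) _)
    (integral_sin_pow_pos_pi_div_two _) hφ hφr
end
end

section
/- Let λ > 0 and let S ⊂ ℝⁿ be the λ-convex spindle with vertices p and q, |p−q| = d, 0 < d < 2/λ. Then the circumradius of S equals d/2, and the smallest enclosing ball is the ball with diameter [p,q]. -/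
/-! If a point `x` lies outside the ball with diameter `[p, q]`, push the centre of that ball
away from `x` until its radius can be enlarged to `1/λ`: the resulting ball of radius `1/λ`
still contains `p` and `q` but misses `x`. Hence the spindle lies in the ball with diameter
`[p, q]`, and since every ball containing `p` and `q` has radius at least `|p - q|/2`, with
equality only for the midpoint as centre (strict convexity), this ball is the unique smallest
enclosing one. -/

open Metric Set MeasureTheory Pointwise RealInnerProductSpace

noncomputable section

theorem half_dist_le_of_mem_closedBall {X : Type*} [PseudoMetricSpace X] {p q c : X} {r : ℝ}
    (hp : p ∈ closedBall c r) (hq : q ∈ closedBall c r) : dist p q / 2 ≤ r := by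
  have := dist_triangle_right p q c
  rw [mem_closedBall] at hp hq
  linarith

section NormedSpace

variable {E : Type*} [NormedAddCommGroup E] [NormedSpace ℝ E]

theorem left_mem_closedBall_midpoint (p q : E) :
    p ∈ closedBall (midpoint ℝ p q) (dist p q / 2) :=
  mem_closedBall.mpr <| le_of_eq (by rw [dist_left_midpoint, Real.norm_two, inv_mul_eq_div])

theorem right_mem_closedBall_midpoint (p q : E) :
    q ∈ closedBall (midpoint ℝ p q) (dist p q / 2) :=
  mem_closedBall.mpr <| le_of_eq (by rw [dist_right_midpoint, Real.norm_two, inv_mul_eq_div])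

theorem exists_closedBall_superset_notMem {m x : E} {r ρ : ℝ} (hr : 0 ≤ r) (hrρ : r ≤ ρ)
    (hx : r < dist x m) : ∃ c, closedBall m r ⊆ closedBall c ρ ∧ x ∉ closedBall c ρ := by
  generalize hs_def : dist x m = s at hx
  have hs : 0 < s := hr.trans_lt hx
  -- the centre lies on the ray from `x` through `m`, at distance `ρ - r` beyond `m`
  set c := AffineMap.lineMap x m ((s + (ρ - r)) / s)
  have hcx : dist c x = s + (ρ - r) := by
    rw [dist_lineMap_left, hs_def, Real.norm_of_nonneg (by positivity)]
    field_simp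
  have hcm : dist c m = ρ - r := by
    rw [dist_lineMap_right, show 1 - (s + (ρ - r)) / s = -((ρ - r) / s) by field_simp; ring,
      norm_neg, Real.norm_of_nonneg (by positivity), hs_def]
    field_simp
  refine ⟨c, closedBall_subset_closedBall' ?_, fun hxc => ?_⟩
  · rw [dist_comm, hcm]; linarith
  · rw [mem_closedBall, dist_comm, hcx] at hxc
    linarith

theorem eq_midpoint_of_mem_closedBall_of_le [StrictConvexSpace ℝ E] {p q c : E} {r : ℝ}
    (hp : p ∈ closedBall c r) (hq : q ∈ closedBall c r) (hr : r ≤ dist p q / 2) :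
    c = midpoint ℝ p q ∧ r = dist p q / 2 := by
  have := dist_triangle_right p q c
  rw [mem_closedBall] at hp hq
  refine ⟨eq_midpoint_of_dist_eq_half (by linarith) (by rw [dist_comm]; linarith), by linarith⟩

end NormedSpace

section Spindle

variable {n : ℕ} {lam : ℝ} {p q : Euc n}

theorem left_mem_spindle : p ∈ spindle lam p q :=
  mem_iInter₂.mpr fun _ hc => hc.1

theorem right_mem_spindle : q ∈ spindle lam p q :=
  mem_iInter₂.mpr fun _ hc => hc.2

theorem half_dist_le_of_spindle_subset_closedBall {c : Euc n} {r : ℝ}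
    (h : spindle lam p q ⊆ closedBall c r) : dist p q / 2 ≤ r :=
  half_dist_le_of_mem_closedBall (h left_mem_spindle) (h right_mem_spindle)

theorem spindle_subset_closedBall_midpoint (hd : dist p q ≤ 2 / lam) :
    spindle lam p q ⊆ closedBall (midpoint ℝ p q) (dist p q / 2) := by
  intro x hx
  by_contra hxm
  obtain ⟨c, hsub, hxc⟩ := exists_closedBall_superset_notMem (m := midpoint ℝ p q)
    (ρ := 1 / lam) (by positivity) (by linarith [show 2 / lam = 2 * (1 / lam) by ring])
    (not_le.mp hxm)
  exact hxc (mem_iInter₂.mp hx c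
    ⟨hsub (left_mem_closedBall_midpoint p q), hsub (right_mem_closedBall_midpoint p q)⟩)

end Spindle

theorem stmt15_general {n : ℕ} (lam : ℝ) (p q : Euc n)
    (hd : dist p q < 2/lam) :
    circumradius (spindle lam p q) = dist p q / 2 ∧
      spindle lam p q ⊆ closedBall (midpoint ℝ p q) (dist p q / 2) ∧
      ∀ (c : Euc n) (r : ℝ), spindle lam p q ⊆ closedBall c r →
        r ≤ dist p q / 2 → c = midpoint ℝ p q ∧ r = dist p q / 2 := by
  have hsub := spindle_subset_closedBall_midpoint hd.le
  have hleast : IsLeast {r | ∃ c, spindle lam p q ⊆ closedBall c r} (dist p q / 2) :=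
    ⟨⟨_, hsub⟩, fun _ ⟨_, hc⟩ => half_dist_le_of_spindle_subset_closedBall hc⟩
  exact ⟨hleast.csInf_eq, hsub, fun c r hc hr =>
    eq_midpoint_of_mem_closedBall_of_le (hc left_mem_spindle) (hc right_mem_spindle) hr⟩

theorem stmt15 {n : ℕ} (lam : ℝ) (hlam : 0 < lam) (p q : Euc n)
    (hpq : 0 < dist p q) (hd : dist p q < 2/lam) :
    circumradius (spindle lam p q) = dist p q / 2 ∧
      spindle lam p q ⊆ closedBall (midpoint ℝ p q) (dist p q / 2) ∧
      ∀ (c : Euc n) (r : ℝ), spindle lam p q ⊆ closedBall c r →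
        r ≤ dist p q / 2 → c = midpoint ℝ p q ∧ r = dist p q / 2 :=
  stmt15_general lam p q hd
end
end

section
/- Let K ⊂ ℝⁿ be a convex body with inscribed ball B of radius r centered at the origin. Then the set of touching points ∂K ∩ ∂B is not contained in any open hemisphere of ∂B; that is, there is no unit vector v with ⟨v, x⟩ > 0 for all x ∈ ∂K ∩ ∂B. -/
open Metric Set MeasureTheory Pointwise RealInnerProductSpace

noncomputable section

/-!
If all touching points lay in the open hemisphere of `v`, then by compactness the ball
`closedBall 0 (r + ε)` would stay inside `interior K ∪ {x | 0 < ⟪v, x⟫}` for some `ε > 0`.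
Translating the inscribed ball by `-ε • v` then pushes it into the interior of `K`: a point of
the translate outside `ball 0 r` satisfies `⟪v, x⟫ ≤ 0`. A compact ball in the open set
`interior K` can be enlarged, contradicting maximality of `r`.
-/

theorem exists_closedBall_add_subset_of_isOpen {E : Type*} [NormedAddCommGroup E]
    [NormedSpace ℝ E] [ProperSpace E] {U : Set E} (hU : IsOpen U) {c : E} {r : ℝ} (hr : 0 ≤ r)
    (h : closedBall c r ⊆ U) : ∃ ρ > 0, closedBall c (r + ρ) ⊆ U := by
  obtain ⟨ρ, hρ, hρU⟩ := (isCompact_closedBall c r).exists_cthickening_subset_open hU h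
  rw [cthickening_closedBall hρ.le hr, add_comm] at hρU
  exact ⟨ρ, hρ, hρU⟩

theorem inner_nonpos_of_norm_add_le_norm {E : Type*} [NormedAddCommGroup E]
    [InnerProductSpace ℝ E] {w y : E} (h : ‖y + w‖ ≤ ‖y‖) : ⟪w, y⟫ ≤ 0 := by
  have hsq : ‖y + w‖ ^ 2 ≤ ‖y‖ ^ 2 := pow_le_pow_left₀ (norm_nonneg _) h 2
  rw [norm_add_sq_real, real_inner_comm] at hsq
  nlinarith [sq_nonneg ‖w‖]

theorem exists_closedBall_subset_interior_of_inner_pos {E : Type*} [NormedAddCommGroup E]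
    [InnerProductSpace ℝ E] [ProperSpace E] {K : Set E} {r : ℝ} (hr : 0 ≤ r)
    (hsub : closedBall 0 r ⊆ K) {v : E} (hv : ‖v‖ ≤ 1)
    (htouch : ∀ x ∈ frontier K ∩ sphere 0 r, 0 < ⟪v, x⟫) :
    ∃ c, closedBall c r ⊆ interior K := by
  have hball : ball 0 r ⊆ interior K :=
    interior_maximal (ball_subset_closedBall.trans hsub) isOpen_ball
  have hcover : closedBall 0 r ⊆ interior K ∪ {x | 0 < ⟪v, x⟫} := by
    intro x hx
    by_cases hxK : x ∈ interior K
    · exact Or.inl hxK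
    have hxr : ‖x‖ = r := (mem_closedBall_zero_iff.mp hx).antisymm
      (not_lt.mp fun hlt => hxK (hball (mem_ball_zero_iff.mpr hlt)))
    exact Or.inr (htouch x ⟨⟨subset_closure (hsub hx), hxK⟩, mem_sphere_zero_iff_norm.mpr hxr⟩)
  have hopen : IsOpen (interior K ∪ {x | 0 < ⟪v, x⟫}) :=
    isOpen_interior.union (isOpen_lt continuous_const (continuous_const.inner continuous_id))
  obtain ⟨ε, hε, hεU⟩ := exists_closedBall_add_subset_of_isOpen hopen hr hcover
  refine ⟨-(ε • v), fun y hy => ?_⟩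
  have hyv : ‖y + ε • v‖ ≤ r := by rwa [mem_closedBall, dist_eq_norm, sub_neg_eq_add] at hy
  rcases lt_or_ge ‖y‖ r with hlt | hge
  · exact hball (mem_ball_zero_iff.mpr hlt)
  have hεv : ‖ε • v‖ ≤ ε := by
    rw [norm_smul, Real.norm_of_nonneg hε.le]
    exact mul_le_of_le_one_right hε.le hv
  have hyε : ‖y‖ ≤ r + ε := calc
    ‖y‖ = ‖(y + ε • v) - ε • v‖ := by rw [add_sub_cancel_right]
    _ ≤ ‖y + ε • v‖ + ‖ε • v‖ := norm_sub_le _ _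
    _ ≤ r + ε := add_le_add hyv hεv
  refine (hεU (mem_closedBall_zero_iff.mpr hyε)).resolve_right fun hpos => ?_
  have hnonpos : ε * ⟪v, y⟫ ≤ 0 := by
    rw [← real_inner_smul_left]
    exact inner_nonpos_of_norm_add_le_norm (hyv.trans hge)
  exact (mul_pos hε hpos).not_ge hnonpos

theorem stmt16_general {n : ℕ} (K : Set (Euc n)) (r : ℝ) (hr : 0 < r)
    (hsub : closedBall (0 : Euc n) r ⊆ K)
    (hmax : ∀ (c : Euc n) (r' : ℝ), closedBall c r' ⊆ K → r' ≤ r) :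
    ¬ ∃ v : Euc n, ‖v‖ = 1 ∧
        ∀ x ∈ frontier K ∩ sphere (0 : Euc n) r, 0 < (inner ℝ v x : ℝ) := by
  rintro ⟨v, hv, htouch⟩
  obtain ⟨c, hc⟩ := exists_closedBall_subset_interior_of_inner_pos hr.le hsub hv.le htouch
  obtain ⟨ρ, hρ, hcρ⟩ := exists_closedBall_add_subset_of_isOpen isOpen_interior hr.le hc
  linarith [hmax c (r + ρ) (hcρ.trans interior_subset)]

theorem stmt16 {n : ℕ} (K : Set (Euc n)) (hK : IsConvexBody K) (r : ℝ) (hr : 0 < r)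
    (hsub : closedBall (0 : Euc n) r ⊆ K)
    (hmax : ∀ (c : Euc n) (r' : ℝ), closedBall c r' ⊆ K → r' ≤ r) :
    ¬ ∃ v : Euc n, ‖v‖ = 1 ∧
        ∀ x ∈ frontier K ∩ sphere (0 : Euc n) r, 0 < (inner ℝ v x : ℝ) :=
  stmt16_general K r hr hsub hmax
end
end

section
/- Let λ > 0 and let K ⊂ ℝⁿ be a λ-convex body containing a ball of radius ρ ≤ 1/λ. Let p be a boundary point of K at which K is tangent to that ball (the ball touches ∂K at p). Then K is contained in the closed ball of radius 1/λ that is tangent to the inscribed ball at p and contains it; i.e., if the inner ball is B_ρ(o) and p ∈ ∂B_ρ(o) ∩ ∂K, then K ⊆ B_{1/λ}(o + (ρ − 1/λ)·(p − o)/ρ). -/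
/-! The centres of the balls of radius `1/λ` containing `K` form a compact set, and one farthest
from `p` gives a supporting ball at `p`: otherwise a small ball around `p` would lie in `K`. That
ball contains `B_ρ(o)` and passes through the point `p` of its boundary, so by strict convexity `o`
lies on the segment from `p` to its centre, which pins the centre down. -/

open Metric Set MeasureTheory Pointwise RealInnerProductSpace

noncomputable section

theorem Metric.exists_supporting_closedBall_of_mem_frontier_biInter {X : Type*} [MetricSpace X]
    [ProperSpace X] {C : Set X} {R : ℝ} {p : X}
    (hp : p ∈ frontier (⋂ c ∈ C, closedBall c R)) :
    ∃ c, (⋂ c ∈ C, closedBall c R) ⊆ closedBall c R ∧ dist p c = R := by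
  set K := ⋂ c ∈ C, closedBall c R
  have hpK : p ∈ K :=
    (isClosed_biInter fun c _ => isClosed_closedBall).frontier_subset hp
  set D := ⋂ x ∈ K, closedBall x R
  have hD : ∀ c, c ∈ D ↔ K ⊆ closedBall c R := fun c => by
    simp only [D, mem_iInter₂, subset_def, mem_closedBall_comm]
  have hCD : C ⊆ D := fun c hc => (hD c).2 (biInter_subset_of_mem hc)
  rcases C.eq_empty_or_nonempty with rfl | ⟨c₀, hc₀⟩
  · simp [K] at hp
  have hDcpt : IsCompact D := (isCompact_closedBall p R).of_isClosed_subset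
    (isClosed_biInter fun x _ => isClosed_closedBall) (biInter_subset_of_mem hpK)
  obtain ⟨c, hcD, hcmax⟩ := hDcpt.exists_isMaxOn ⟨c₀, hCD hc₀⟩
    (continuous_const.dist continuous_id).continuousOn
  refine ⟨c, (hD c).1 hcD, le_antisymm (mem_closedBall.1 ((hD c).1 hcD hpK)) ?_⟩
  by_contra! hlt
  have hball : ball p (R - dist p c) ⊆ K := fun y hy => mem_iInter₂.2 fun c' hc' => by
    have hc'c : dist p c' ≤ dist p c := hcmax (hCD hc')
    rw [mem_ball] at hy
    exact mem_closedBall.2 (by linarith [dist_triangle y p c'])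
  exact hp.2 (mem_interior.2 ⟨_, hball, isOpen_ball, mem_ball_self (by linarith)⟩)

section NormedSpace

variable {E : Type*} [NormedAddCommGroup E] [NormedSpace ℝ E]

theorem add_dist_le_of_closedBall_subset_closedBall {o c : E} {ρ R : ℝ}
    (hs : (sphere o ρ).Nonempty) (h : closedBall o ρ ⊆ closedBall c R) : ρ + dist o c ≤ R := by
  obtain ⟨x, hx⟩ := hs
  have hρ : 0 ≤ ρ := mem_sphere.1 hx ▸ dist_nonneg
  rcases eq_or_ne o c with rfl | hne
  · simpa [mem_sphere.1 hx] using h (sphere_subset_closedBall hx)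
  set d := dist o c
  have hd : 0 < d := dist_pos.2 hne
  -- the point of `closedBall o ρ` farthest from `c`
  have hfar : o + (ρ / d) • (o - c) ∈ closedBall o ρ := by
    rw [mem_closedBall, dist_eq_norm, add_sub_cancel_left, norm_smul, ← dist_eq_norm,
      Real.norm_of_nonneg (by positivity), div_mul_cancel₀ _ hd.ne']
  have hdist : dist (o + (ρ / d) • (o - c)) c = ρ + d := by
    rw [dist_eq_norm, show o + (ρ / d) • (o - c) - c = (1 + ρ / d) • (o - c) by module,
      norm_smul, ← dist_eq_norm, Real.norm_of_nonneg (by positivity)]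
    field_simp
    ring
  simpa [hdist] using h hfar

theorem eq_of_closedBall_subset_closedBall_of_dist_eq [StrictConvexSpace ℝ E] {o c p : E}
    {ρ R : ℝ} (hρ : 0 < ρ) (hp : p ∈ sphere o ρ) (h : closedBall o ρ ⊆ closedBall c R)
    (hpc : dist p c = R) : c = o + ((ρ - R) / ρ) • (p - o) := by
  have hpo : dist p o = ρ := mem_sphere.1 hp
  have hle := add_dist_le_of_closedBall_subset_closedBall ⟨p, hp⟩ h
  have hbtw : Wbtw ℝ p o c :=
    dist_add_dist_eq_iff.1 (le_antisymm (hpc ▸ hpo ▸ hle) (dist_triangle p o c))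
  obtain ⟨t, ⟨ht0, -⟩, rfl⟩ := hbtw
  rw [dist_left_lineMap, hpc, Real.norm_of_nonneg ht0] at hpo
  have ht : t ≠ 0 := by rintro rfl; linarith [zero_mul R]
  have hR : R ≠ 0 := by rintro rfl; linarith [mul_zero t]
  rw [← hpo, AffineMap.lineMap_apply_module]
  match_scalars <;> field_simp <;> ring

end NormedSpace

theorem stmt19_general {n : ℕ} (lam ρ : ℝ) (hρ : 0 < ρ)
    (K : Set (Euc n)) (hK : IsLamConvex lam K) (o : Euc n)
    (hsub : closedBall o ρ ⊆ K) (p : Euc n)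
    (hp : p ∈ sphere o ρ ∩ frontier K) :
    K ⊆ closedBall (o + ((ρ - 1/lam)/ρ) • (p - o)) (1/lam) := by
  obtain ⟨-, C, -, rfl⟩ := hK
  obtain ⟨c, hKc, hpc⟩ := exists_supporting_closedBall_of_mem_frontier_biInter hp.2
  rwa [← eq_of_closedBall_subset_closedBall_of_dist_eq hρ hp.1 (hsub.trans hKc) hpc]

theorem stmt19 {n : ℕ} (lam ρ : ℝ) (hlam : 0 < lam) (hρ : 0 < ρ) (hρl : ρ ≤ 1/lam)
    (K : Set (Euc n)) (hK : IsLamConvex lam K) (o : Euc n)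
    (hsub : closedBall o ρ ⊆ K) (p : Euc n)
    (hp : p ∈ sphere o ρ ∩ frontier K) :
    K ⊆ closedBall (o + ((ρ - 1/lam)/ρ) • (p - o)) (1/lam) :=
  stmt19_general lam ρ hρ K hK o hsub p hp
end
end
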